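/- If X and X' are independent, each uniformly distributed on a finite subset A of ℤ with |A| = n, then H(X + X') - H(X) ≥ 1/2 - (log n)/n - 1/(2n²). In particular, H(X + X') - H(X) ≥ 1/2 - o(1) as n → ∞. -/

import Mathlib

/-- Convolution of two functions on `ℤ`. -/
noncomputable def convZ (f g : ℤ → ℝ) : ℤ → ℝ := fun k => ∑' i : ℤ, f i * g (k - i)

/-- Shannon entropy of a probability mass function on `ℤ`. -/
noncomputable def entZ (f : ℤ → ℝ) : ℝ := ∑' i : ℤ, Real.negMulLog (f i)

/-- The uniform probability mass function on a finite subset of `ℤ`. -/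
noncomputable def unif (A : Finset ℤ) : ℤ → ℝ :=
  fun i => if i ∈ A then ((A.card : ℝ))⁻¹ else 0

/-!
Write `r(k)` for the number of `(a, b) ∈ A × A` with `a + b = k`. Then `X + X'` has law `r / n²`,
so `H(X + X') = 2 log n - n⁻² ∑_{(a, b) ∈ A × A} log r(a + b)`. Enumerate `A` as
`a₀ < ⋯ < a_{n-1}`. Any `x + y = aᵢ + aⱼ` with `x, y ∈ A` has `x ≤ aᵢ` or `y < aⱼ`, and also
`x ≥ aᵢ` or `y > aⱼ`; counting the two cases gives `r(aᵢ + aⱼ) ≤ min (i + j + 1) (2n - 1 - i - j)`.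
The right side is the number of ways to write `i + j` as a sum of two elements of
`{0, …, n - 1}`, so `H(X + X')` is at least the entropy of the triangular distribution,
`2 log n - n⁻² (n log n + 2 ∑_{t < n} t log t)`. Comparing the sum with `∫₁ⁿ x log x dx` finishes.
-/

open Finset Real

section Representations

variable {G : Type*}

def reprCount [Add G] [DecidableEq G] (A : Finset G) (k : G) : ℕ :=
  #{p ∈ A ×ˢ A | p.1 + p.2 = k}

theorem tsum_reprCount_mul [Add G] [DecidableEq G] (A : Finset G) (g : G → ℝ) :
    ∑' k, (reprCount A k : ℝ) * g k = ∑ p ∈ A ×ˢ A, g (p.1 + p.2) := by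
  rw [sum_comp, tsum_eq_sum (s := (A ×ˢ A).image fun p => p.1 + p.2)]
  · simp [reprCount, nsmul_eq_mul]
  · intro k hk
    have : reprCount A k = 0 := by
      rw [reprCount, card_eq_zero, filter_eq_empty_iff]
      exact fun p hp hpk => hk (mem_image.2 ⟨p, hp, hpk⟩)
    simp [this]

theorem reprCount_add_pos [Add G] [DecidableEq G] {A : Finset G} {a b : G} (ha : a ∈ A)
    (hb : b ∈ A) : 0 < reprCount A (a + b) :=
  card_pos.2 ⟨(a, b), mem_filter.2 ⟨mem_product.2 ⟨ha, hb⟩, rfl⟩⟩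

theorem reprCount_le_card_filter_add_card_filter [Add G] [IsCancelAdd G] [DecidableEq G]
    (A : Finset G) {k : G} (P Q : G → Prop) [DecidablePred P] [DecidablePred Q]
    (hPQ : ∀ x ∈ A, ∀ y ∈ A, x + y = k → P x ∨ Q y) :
    reprCount A k ≤ #{x ∈ A | P x} + #{y ∈ A | Q y} := by
  set S := {p ∈ A ×ˢ A | p.1 + p.2 = k}
  rw [reprCount, ← card_filter_add_card_filter_not (s := S) (fun p => P p.1)]
  gcongr
  · refine card_le_card_of_injOn Prod.fst (fun p hp => ?_) fun p hp q hq hpq => ?_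
    · simp_all [S]
    · simp only [S, mem_coe, mem_filter] at hp hq
      exact Prod.ext hpq (add_left_cancel (hp.1.2.trans (hpq ▸ hq.1.2.symm)))
  · refine card_le_card_of_injOn Prod.snd (fun p hp => ?_) fun p hp q hq hpq => ?_
    · simp only [S, mem_coe, mem_filter, mem_product] at hp ⊢
      exact ⟨hp.1.1.2, (hPQ _ hp.1.1.1 _ hp.1.1.2 hp.1.2).resolve_left hp.2⟩
    · simp only [S, mem_coe, mem_filter] at hp hq
      exact Prod.ext (add_right_cancel (hp.1.2.trans (hpq ▸ hq.1.2.symm))) hpq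

end Representations

section Triangular

def triangularCount (n s : ℕ) : ℕ := min (s + 1) (2 * n - 1 - s)

theorem card_filter_fin_add_eq (n s : ℕ) :
    #{q : Fin n × Fin n | (q.1 : ℕ) + q.2 = s} = triangularCount n s := by
  have : #{q : Fin n × Fin n | (q.1 : ℕ) + q.2 = s} = #(Icc (s + 1 - n) (min s (n - 1))) := by
    refine card_nbij (fun q => q.1) (fun q hq => ?_) (fun q hq r hr hqr => ?_) fun i hi => ?_
    · simp only [coe_filter, mem_univ, true_and, Set.mem_ofPred_eq] at hq
      simp only [coe_Icc, Set.mem_Icc]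
      omega
    · simp only [coe_filter, mem_univ, true_and, Set.mem_ofPred_eq] at hq hr
      exact Prod.ext (Fin.ext hqr) (Fin.ext (by simp only at hqr; omega))
    · simp only [coe_Icc, Set.mem_Icc] at hi
      refine ⟨(⟨i, by omega⟩, ⟨s - i, by omega⟩), ?_, rfl⟩
      simp only [coe_filter, mem_univ, true_and, Set.mem_ofPred_eq]
      omega
  rw [this, Nat.card_Icc, triangularCount]
  omega

theorem sum_fin_prod_comp_add {M : Type*} [AddCommMonoid M] (n : ℕ) (f : ℕ → M) :
    ∑ q : Fin n × Fin n, f (q.1 + q.2) = ∑ s ∈ range (2 * n), triangularCount n s • f s := by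
  rw [← sum_fiberwise_of_maps_to (t := range (2 * n)) (g := fun q : Fin n × Fin n => q.1 + q.2)
    fun q _ => by simp only [mem_range]; omega]
  refine sum_congr rfl fun s _ => ?_
  rw [sum_congr rfl fun q hq => by rw [(mem_filter.1 hq).2], sum_const, card_filter_fin_add_eq]

theorem sum_range_comp_triangularCount {M : Type*} [AddCommMonoid M] (n : ℕ) (φ : ℕ → M)
    (h0 : φ 0 = 0) :
    ∑ s ∈ range (2 * n), φ (triangularCount n s) = φ n + 2 • ∑ t ∈ range n, φ t := by
  have rising : ∑ s ∈ range n, φ (triangularCount n s) = ∑ s ∈ range n, φ (s + 1) :=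
    sum_congr rfl fun s hs => by
      rw [mem_range] at hs
      rw [triangularCount, min_eq_left (by omega)]
  have falling : ∑ s ∈ range n, φ (triangularCount n (n + s)) = ∑ s ∈ range n, φ (n - 1 - s) :=
    sum_congr rfl fun s hs => by
      rw [mem_range] at hs
      rw [triangularCount, min_eq_right (by omega)]
      congr 1
      omega
  have shift := sum_range_succ' φ n
  rw [sum_range_succ, h0, add_zero] at shift
  rw [two_mul, sum_range_add, rising, falling, sum_range_reflect, ← shift, two_nsmul]
  abel

end Triangular

section Ordered

variable {α : Type*} [LinearOrder α]

theorem card_filter_eq_card_filter_orderEmbOfFin (A : Finset α) {n : ℕ} (hn : #A = n)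
    (P : α → Prop) [DecidablePred P] :
    #{x ∈ A | P x} = #{i : Fin n | P (A.orderEmbOfFin hn i)} := by
  conv_lhs => rw [← A.map_orderEmbOfFin_univ hn]
  rw [filter_map, card_map]
  rfl

theorem reprCount_orderEmbOfFin_add_le [AddCommMonoid α] [IsOrderedCancelAddMonoid α]
    (A : Finset α) {n : ℕ} (hn : #A = n) (i j : Fin n) :
    reprCount A (A.orderEmbOfFin hn i + A.orderEmbOfFin hn j) ≤ triangularCount n (i + j) := by
  set e := A.orderEmbOfFin hn
  have below : reprCount A (e i + e j) ≤ (i + 1) + j := by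
    have := reprCount_le_card_filter_add_card_filter A (· ≤ e i) (· < e j)
      fun x _ y _ hxy => by
        by_contra! h
        exact (add_lt_add_of_lt_of_le h.1 h.2).ne' hxy
    rw [card_filter_eq_card_filter_orderEmbOfFin A hn,
      card_filter_eq_card_filter_orderEmbOfFin A hn] at this
    simpa [e, filter_ge_eq_Iic, filter_gt_eq_Iio] using this
  have above : reprCount A (e i + e j) ≤ (n - i) + (n - 1 - j) := by
    have := reprCount_le_card_filter_add_card_filter A (e i ≤ ·) (e j < ·)
      fun x _ y _ hxy => by
        by_contra! h
        exact (add_lt_add_of_lt_of_le h.1 h.2).ne hxy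
    rw [card_filter_eq_card_filter_orderEmbOfFin A hn,
      card_filter_eq_card_filter_orderEmbOfFin A hn] at this
    simpa [e, filter_le_eq_Ici, filter_lt_eq_Ioi] using this
  unfold triangularCount
  omega

theorem sum_log_reprCount_le [AddCommMonoid α] [IsOrderedCancelAddMonoid α]
    (A : Finset α) {n : ℕ} (hn : #A = n) :
    ∑ p ∈ A ×ˢ A, log (reprCount A (p.1 + p.2)) ≤
      ∑ q : Fin n × Fin n, log (triangularCount n (q.1 + q.2)) := by
  have reindex (g : α → ℝ) : ∑ a ∈ A, g a = ∑ i : Fin n, g (A.orderEmbOfFin hn i) := by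
    conv_lhs => rw [← A.map_orderEmbOfFin_univ hn]
    rw [sum_map]
    rfl
  simp_rw [sum_product, reindex, Fintype.sum_prod_type]
  gcongr with i _ j _
  · exact_mod_cast reprCount_add_pos (A.orderEmbOfFin_mem hn i) (A.orderEmbOfFin_mem hn j)
  · exact_mod_cast reprCount_orderEmbOfFin_add_le A hn i j

end Ordered

theorem sum_range_mul_log_le (n : ℕ) :
    ∑ t ∈ range n, (t : ℝ) * log t ≤ n ^ 2 / 2 * log n - n ^ 2 / 4 + 1 / 4 := by
  rcases n.eq_zero_or_pos with rfl | hn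
  · norm_num
  have antideriv (x : ℝ) (hx : x ≠ 0) :
      HasDerivAt (fun x => x ^ 2 / 2 * log x - x ^ 2 / 4) (x * log x) x := by
    refine ((((hasDerivAt_pow 2 x).div_const 2).mul (hasDerivAt_log hx)).sub
      ((hasDerivAt_pow 2 x).div_const 4)).congr_deriv ?_
    field_simp
    ring
  rw [range_eq_Ico, sum_eq_sum_Ico_succ_bot hn, Nat.cast_zero, zero_mul, zero_add]
  calc ∑ t ∈ Ico 1 n, (t : ℝ) * log t
      ≤ ∫ x in (1 : ℕ)..(n : ℕ), x * log x :=
        MonotoneOn.sum_le_integral_Ico hn <| mul_log_strictMonoOn.monotoneOn.mono fun x hx =>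
          le_trans (by simp [exp_le_one_iff.2 (by norm_num : (-1 : ℝ) ≤ 0)]) hx.1
    _ = n ^ 2 / 2 * log n - n ^ 2 / 4 + 1 / 4 := by
      rw [intervalIntegral.integral_eq_sub_of_hasDerivAt (fun x hx => antideriv x ?_)
        (continuous_mul_log.intervalIntegrable _ _)]
      · simp
      · rw [Set.uIcc_of_le (by exact_mod_cast hn)] at hx
        exact (one_pos.trans_le (by exact_mod_cast hx.1)).ne'

theorem Real.negMulLog_div (x y : ℝ) : negMulLog (x / y) = x * (log y - log x) / y := by
  rcases eq_or_ne x 0 with rfl | hx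
  · simp
  rcases eq_or_ne y 0 with rfl | hy
  · simp
  rw [negMulLog, log_div hx hy]
  ring

section UniformOnIntegers

variable (A : Finset ℤ)

theorem convZ_unif_self (k : ℤ) :
    convZ (unif A) (unif A) k = reprCount A k / #A ^ 2 := by
  have fiber : reprCount A k = #{i ∈ A | k - i ∈ A} := by
    refine card_nbij' Prod.fst (fun i => (i, k - i)) ?_ ?_ ?_ ?_ <;> intro p hp
    · simp only [mem_coe, mem_filter, mem_product] at hp ⊢
      exact ⟨hp.1.1, by rw [← hp.2, add_sub_cancel_left]; exact hp.1.2⟩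
    · simp_all
    · simp only [mem_coe, mem_filter, mem_product] at hp
      exact Prod.ext rfl (show k - p.1 = p.2 by omega)
    · rfl
  rw [convZ, tsum_eq_sum (s := A) fun i hi => by simp [unif, hi], fiber]
  simp only [unif, mul_ite, mul_zero]
  rw [sum_congr rfl fun i hi => by rw [if_pos hi], sum_ite, sum_const_zero, add_zero, sum_const,
    nsmul_eq_mul]
  ring

theorem entZ_unif : entZ (unif A) = log #A := by
  rw [entZ, tsum_eq_sum (s := A) fun i hi => by simp [unif, hi],
    sum_congr rfl fun i hi => by rw [unif, if_pos hi], sum_const, nsmul_eq_mul, negMulLog, log_inv]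
  rcases eq_or_ne (#A : ℝ) 0 with h | h
  · simp [h]
  · field_simp

theorem entZ_convZ_unif_self :
    entZ (convZ (unif A) (unif A)) =
      2 * log #A - (∑ p ∈ A ×ˢ A, log (reprCount A (p.1 + p.2))) / #A ^ 2 := by
  simp_rw [entZ, convZ_unif_self, negMulLog_div, mul_div_assoc, tsum_reprCount_mul, ← sum_div,
    sum_sub_distrib, sum_const, card_product, log_pow]
  rcases eq_or_ne (#A : ℝ) 0 with h | h
  · simp [h]
  · field_simp
    push_cast
    ring

end UniformOnIntegers

/-- For `X, X'` i.i.d. uniform on a finite `A ⊆ ℤ` with `|A| = n`,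
`H(X + X') - H(X) ≥ 1/2 - (log n)/n - 1/(2n²)`. -/
theorem entropy_doubling_uniform (A : Finset ℤ) (n : ℕ) (hn : A.card = n) (hpos : 0 < n) :
    entZ (convZ (unif A) (unif A)) - entZ (unif A) ≥
      1 / 2 - Real.log n / n - 1 / (2 * (n : ℝ) ^ 2) := by
  set S := ∑ p ∈ A ×ˢ A, log (reprCount A (p.1 + p.2))
  have triangular : S ≤ n * log n + 2 * ∑ t ∈ range n, (t : ℝ) * log t :=
    calc S ≤ ∑ q : Fin n × Fin n, log (triangularCount n (q.1 + q.2)) := sum_log_reprCount_le A hn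
      _ = ∑ s ∈ range (2 * n), (triangularCount n s : ℝ) * log (triangularCount n s) := by
        simp_rw [sum_fin_prod_comp_add n fun s => log (triangularCount n s), nsmul_eq_mul]
      _ = n * log n + 2 * ∑ t ∈ range n, (t : ℝ) * log t := by
        rw [sum_range_comp_triangularCount n (fun t => (t : ℝ) * log t) (by simp), two_nsmul,
          two_mul]
  have hn₀ : (0 : ℝ) < n := by exact_mod_cast hpos
  have key : S / n ^ 2 ≤ log n / n + log n - 1 / 2 + 1 / (2 * n ^ 2) := by
    have expand : (log n / n + log n - 1 / 2 + 1 / (2 * n ^ 2)) * n ^ 2 =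
        n * log n + 2 * (n ^ 2 / 2 * log n - n ^ 2 / 4 + 1 / 4) := by
      field_simp
      ring
    rw [div_le_iff₀ (by positivity), expand]
    linarith [sum_range_mul_log_le n]
  rw [entZ_convZ_unif_self, entZ_unif, hn]
  linarith
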